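/- arXiv:2112.05515 — 6 statements merged into one kernel-verified Lean document; each statement's English description precedes it below -/
import Mathlib

section
/- Let M be a partial commutative monoid and cl a strong closure operator on P(M). Define on closed sets: EMP = cl({e}) and X * Y = cl(X • Y). Then (closed sets, *, EMP) forms a commutative monoid: * is commutative, associative, and EMP * X = X for all closed X. -/
/-!
Pointwise, `•` is commutative and associative with unit `{e}`, directly from the PCM laws.
Strength gives `cl (cl X • Y) = cl (X • Y)` (and, by commutativity, the same on the right), so
the inner closures in `(X * Y) * Z` and `X * (Y * Z)` can be dropped and the monoid laws of `•`
lift to `*`.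
-/

/-- A partial commutative monoid: multiplication is partial (`Option`-valued). -/
structure PCM (M : Type) where
  mul : M → M → Option M
  e : M
  mul_comm : ∀ x y, mul x y = mul y x
  mul_unit : ∀ x, mul e x = some x
  mul_assoc : ∀ x y z a b, mul x y = some a → mul a z = some b →
    ∃ c, mul y z = some c ∧ mul x c = some b

/-- `X • Y` on subsets of a PCM. -/
def PCM.sdot {M : Type} (P : PCM M) (X Y : Set M) : Set M :=
  {m | ∃ x ∈ X, ∃ y ∈ Y, P.mul x y = some m}

/-- `X —• Y` on subsets of a PCM. -/
def PCM.swand {M : Type} (P : PCM M) (X Y : Set M) : Set M :=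
  {z | ∀ x ∈ X, ∀ m, P.mul z x = some m → m ∈ Y}

/-- A Moore closure operator on subsets of `M`. -/
structure MooreCl (M : Type) where
  cl : Set M → Set M
  le_cl : ∀ X, X ⊆ cl X
  mono : ∀ X Y : Set M, X ⊆ Y → cl X ⊆ cl Y
  idem : ∀ X, cl (cl X) = cl X

namespace PCM

variable {M : Type} (P : PCM M)

theorem sdot_comm (X Y : Set M) : P.sdot X Y = P.sdot Y X := by
  ext m
  constructor <;> rintro ⟨x, hx, y, hy, h⟩ <;> exact ⟨y, hy, x, hx, (P.mul_comm y x).trans h⟩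

theorem sdot_assoc (X Y Z : Set M) : P.sdot (P.sdot X Y) Z = P.sdot X (P.sdot Y Z) := by
  ext m
  constructor
  · rintro ⟨a, ⟨x, hx, y, hy, hxy⟩, z, hz, haz⟩
    obtain ⟨b, hyz, hxb⟩ := P.mul_assoc x y z a m hxy haz
    exact ⟨x, hx, b, ⟨y, hy, z, hz, hyz⟩, hxb⟩
  · rintro ⟨x, hx, b, ⟨y, hy, z, hz, hyz⟩, hxb⟩
    -- `P.mul_assoc` only reassociates to the right; two rotations by commutativity give the left
    obtain ⟨d, hzx, hyd⟩ := P.mul_assoc y z x b m hyz ((P.mul_comm b x).trans hxb)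
    obtain ⟨a, hxy, haz⟩ := P.mul_assoc z x y d m hzx ((P.mul_comm d y).trans hyd)
    exact ⟨a, ⟨x, hx, y, hy, hxy⟩, z, hz, (P.mul_comm a z).trans haz⟩

theorem singleton_e_sdot (X : Set M) : P.sdot {P.e} X = X := by
  ext m
  constructor
  · rintro ⟨_, rfl, y, hy, h⟩
    rw [P.mul_unit y, Option.some_inj] at h
    exact h ▸ hy
  · exact fun hm => ⟨P.e, rfl, m, hm, P.mul_unit m⟩

theorem sdot_subset_sdot_left {X X' : Set M} (h : X ⊆ X') (Y : Set M) :
    P.sdot X Y ⊆ P.sdot X' Y :=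
  fun _ ⟨x, hx, y, hy, hxy⟩ => ⟨x, h hx, y, hy, hxy⟩

end PCM

namespace MooreCl

variable {M : Type} (P : PCM M) (c : MooreCl M)

def IsStrong : Prop :=
  ∀ X Y : Set M, P.sdot (c.cl X) Y ⊆ c.cl (P.sdot X Y)

variable {P c}

theorem cl_subset_cl_of_subset_cl {X Y : Set M} (h : X ⊆ c.cl Y) : c.cl X ⊆ c.cl Y :=
  c.idem Y ▸ c.mono _ _ h

theorem IsStrong.cl_sdot_cl_left (hc : IsStrong P c) (X Y : Set M) :
    c.cl (P.sdot (c.cl X) Y) = c.cl (P.sdot X Y) :=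
  (cl_subset_cl_of_subset_cl (hc X Y)).antisymm
    (c.mono _ _ (P.sdot_subset_sdot_left (c.le_cl X) Y))

theorem IsStrong.cl_sdot_cl_right (hc : IsStrong P c) (X Y : Set M) :
    c.cl (P.sdot X (c.cl Y)) = c.cl (P.sdot X Y) := by
  rw [P.sdot_comm, hc.cl_sdot_cl_left, P.sdot_comm]

end MooreCl

/-- closed sets with `X * Y = cl (X • Y)` and unit `cl {e}` form a
commutative monoid. -/
theorem lifted_sep_comm_monoid {M : Type} (P : PCM M) (c : MooreCl M)
    (strong : ∀ X Y : Set M, P.sdot (c.cl X) Y ⊆ c.cl (P.sdot X Y)) :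
    (∀ X Y : Set M, c.cl X = X → c.cl Y = Y →
        c.cl (P.sdot X Y) = c.cl (P.sdot Y X)) ∧
    (∀ X Y Z : Set M, c.cl X = X → c.cl Y = Y → c.cl Z = Z →
        c.cl (P.sdot (c.cl (P.sdot X Y)) Z) = c.cl (P.sdot X (c.cl (P.sdot Y Z)))) ∧
    (∀ X : Set M, c.cl X = X → c.cl (P.sdot (c.cl {P.e}) X) = X) := by
  have hc : MooreCl.IsStrong P c := strong
  refine ⟨fun X Y _ _ => by rw [P.sdot_comm], fun X Y Z _ _ _ => ?_, fun X hX => ?_⟩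
  · rw [hc.cl_sdot_cl_left, hc.cl_sdot_cl_right, P.sdot_assoc]
  · rw [hc.cl_sdot_cl_left, P.singleton_e_sdot, hX]
end

section
/- In the cut-free BI sequent calculus, the rule inverting (-*R) is admissible: if Δ ⊢ φ -* ψ is cut-free derivable, then Δ , φ ⊢ ψ is cut-free derivable. -/
/-- Formulas of BI. -/
inductive Frml : Type
  | atom : Nat → Frml
  | top : Frml
  | bot : Frml
  | emp : Frml
  | and : Frml → Frml → Frml
  | or : Frml → Frml → Frml
  | imp : Frml → Frml → Frml
  | sep : Frml → Frml → Frml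
  | wand : Frml → Frml → Frml

/-- Bunches: trees with formula leaves, multiplicative/additive units and nodes. -/
inductive Bunch : Type
  | frml : Frml → Bunch
  | mempty : Bunch    -- ∅ₘ
  | aempty : Bunch    -- ∅ₐ
  | comma : Bunch → Bunch → Bunch   -- multiplicative ','
  | semic : Bunch → Bunch → Bunch   -- additive ';'

/-- Bunched contexts: bunches with a single hole. -/
inductive BCtx : Type
  | hole : BCtx
  | commaL : BCtx → Bunch → BCtx
  | commaR : Bunch → BCtx → BCtx
  | semicL : BCtx → Bunch → BCtx
  | semicR : Bunch → BCtx → BCtx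

/-- Filling the hole of a bunched context with a bunch. -/
def BCtx.fill : BCtx → Bunch → Bunch
  | .hole, Δ => Δ
  | .commaL C Γ, Δ => .comma (C.fill Δ) Γ
  | .commaR Γ C, Δ => .comma Γ (C.fill Δ)
  | .semicL C Γ, Δ => .semic (C.fill Δ) Γ
  | .semicR Γ C, Δ => .semic Γ (C.fill Δ)

/-- Equivalence of bunches: commutative-monoid laws for (',', ∅ₘ) and (';', ∅ₐ),
under arbitrary bunched contexts. -/
inductive BEquiv : Bunch → Bunch → Prop
  | refl (Δ : Bunch) : BEquiv Δ Δ
  | symm {Δ Δ' : Bunch} : BEquiv Δ Δ' → BEquiv Δ' Δ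
  | trans {Δ₁ Δ₂ Δ₃ : Bunch} : BEquiv Δ₁ Δ₂ → BEquiv Δ₂ Δ₃ → BEquiv Δ₁ Δ₃
  | commaComm (Δ₁ Δ₂ : Bunch) : BEquiv (.comma Δ₁ Δ₂) (.comma Δ₂ Δ₁)
  | semicComm (Δ₁ Δ₂ : Bunch) : BEquiv (.semic Δ₁ Δ₂) (.semic Δ₂ Δ₁)
  | commaAssoc (Δ₁ Δ₂ Δ₃ : Bunch) :
      BEquiv (.comma Δ₁ (.comma Δ₂ Δ₃)) (.comma (.comma Δ₁ Δ₂) Δ₃)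
  | semicAssoc (Δ₁ Δ₂ Δ₃ : Bunch) :
      BEquiv (.semic Δ₁ (.semic Δ₂ Δ₃)) (.semic (.semic Δ₁ Δ₂) Δ₃)
  | commaUnit (Δ : Bunch) : BEquiv (.comma Δ .mempty) Δ
  | semicUnit (Δ : Bunch) : BEquiv (.semic Δ .aempty) Δ
  | ctx (C : BCtx) {Δ Δ' : Bunch} : BEquiv Δ Δ' → BEquiv (C.fill Δ) (C.fill Δ')

/-- Cut-free sequent calculus for BI, with the axiom rule restricted to atoms. -/
inductive Proves : Bunch → Frml → Prop
  | ax (a : Nat) : Proves (.frml (.atom a)) (.atom a)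
  | equiv {Δ Δ' : Bunch} {φ : Frml} :
      Proves Δ' φ → BEquiv Δ Δ' → Proves Δ φ
  | weaken (C : BCtx) {Δ₁ Δ₂ : Bunch} {φ : Frml} :
      Proves (C.fill Δ₁) φ → Proves (C.fill (.semic Δ₁ Δ₂)) φ
  | contract (C : BCtx) {Δ₁ : Bunch} {φ : Frml} :
      Proves (C.fill (.semic Δ₁ Δ₁)) φ → Proves (C.fill Δ₁) φ
  | empR : Proves .mempty .emp
  | empL (C : BCtx) {φ : Frml} :
      Proves (C.fill .mempty) φ → Proves (C.fill (.frml .emp)) φ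
  | sepR {Δ₁ Δ₂ : Bunch} {φ ψ : Frml} :
      Proves Δ₁ φ → Proves Δ₂ ψ → Proves (.comma Δ₁ Δ₂) (.sep φ ψ)
  | sepL (C : BCtx) {φ ψ χ : Frml} :
      Proves (C.fill (.comma (.frml φ) (.frml ψ))) χ →
      Proves (C.fill (.frml (.sep φ ψ))) χ
  | wandR {Δ : Bunch} {φ ψ : Frml} :
      Proves (.comma Δ (.frml φ)) ψ → Proves Δ (.wand φ ψ)
  | wandL (C : BCtx) {Δ₁ Δ₂ : Bunch} {φ ψ χ : Frml} :
      Proves Δ₁ φ → Proves (C.fill (.comma Δ₂ (.frml ψ))) χ →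
      Proves (C.fill (.comma (.comma Δ₁ Δ₂) (.frml (.wand φ ψ)))) χ
  | topR : Proves .aempty .top
  | topL (C : BCtx) {φ : Frml} :
      Proves (C.fill .aempty) φ → Proves (C.fill (.frml .top)) φ
  | andR {Δ₁ Δ₂ : Bunch} {φ ψ : Frml} :
      Proves Δ₁ φ → Proves Δ₂ ψ → Proves (.semic Δ₁ Δ₂) (.and φ ψ)
  | andL (C : BCtx) {φ ψ χ : Frml} :
      Proves (C.fill (.semic (.frml φ) (.frml ψ))) χ →
      Proves (C.fill (.frml (.and φ ψ))) χ
  | impR {Δ : Bunch} {φ ψ : Frml} :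
      Proves (.semic Δ (.frml φ)) ψ → Proves Δ (.imp φ ψ)
  | impL (C : BCtx) {Δ₁ Δ₂ : Bunch} {φ ψ χ : Frml} :
      Proves Δ₁ φ → Proves (C.fill (.semic Δ₂ (.frml ψ))) χ →
      Proves (C.fill (.semic (.semic Δ₁ Δ₂) (.frml (.imp φ ψ)))) χ
  | botL (C : BCtx) {φ : Frml} : Proves (C.fill (.frml .bot)) φ
  | orR1 {Δ : Bunch} {φ ψ : Frml} : Proves Δ φ → Proves Δ (.or φ ψ)
  | orR2 {Δ : Bunch} {φ ψ : Frml} : Proves Δ ψ → Proves Δ (.or φ ψ)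
  | orL (C : BCtx) {φ ψ χ : Frml} :
      Proves (C.fill (.frml φ)) χ → Proves (C.fill (.frml ψ)) χ →
      Proves (C.fill (.frml (.or φ ψ))) χ

/-- The formula collapse `⟨Δ⟩` of a bunch. -/
def Bunch.collapse : Bunch → Frml
  | .frml φ => φ
  | .mempty => .emp
  | .aempty => .top
  | .comma Δ₁ Δ₂ => .sep Δ₁.collapse Δ₂.collapse
  | .semic Δ₁ Δ₂ => .and Δ₁.collapse Δ₂.collapse

/- The only right rule that concludes a wand is (-*R) itself, and every other rule that can
conclude `φ -* ψ` acts inside a bunched context `C`; such a rule commutes with extending the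
antecedent to `Δ , φ`, since that extension is just the context `C.commaL (.frml φ)`. -/

/-- invertibility of the (-*R) rule in the cut-free calculus. -/
theorem wandR_inv {Δ : Bunch} {φ ψ : Frml} :
    Proves Δ (.wand φ ψ) → Proves (.comma Δ (.frml φ)) ψ := by
  intro h
  generalize hχ : Frml.wand φ ψ = χ at h
  induction h with
  | wandR p => cases hχ; exact p
  | equiv _ e ih => exact .equiv (ih hχ) (.ctx (.commaL .hole _) e)
  | weaken C _ ih => exact .weaken (C.commaL _) (ih hχ)
  | contract C _ ih => exact .contract (C.commaL _) (ih hχ)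
  | empL C _ ih => exact .empL (C.commaL _) (ih hχ)
  | sepL C _ ih => exact .sepL (C.commaL _) (ih hχ)
  | wandL C p _ _ ih => exact .wandL (C.commaL _) p (ih hχ)
  | topL C _ ih => exact .topL (C.commaL _) (ih hχ)
  | andL C _ ih => exact .andL (C.commaL _) (ih hχ)
  | impL C p _ _ ih => exact .impL (C.commaL _) p (ih hχ)
  | botL C => exact .botL (C.commaL _)
  | orL C _ _ ih₁ ih₂ => exact .orL (C.commaL _) (ih₁ hχ) (ih₂ hχ)
  | _ => cases hχ
end

section
/- In the cut-free BI sequent calculus, the rule inverting (→R) is admissible: if Δ ⊢ φ → ψ is cut-free derivable, then Δ ; φ ⊢ ψ is cut-free derivable. -/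
/-! The last rule of a derivation of `φ → ψ` is either (→R), whose premise is the goal, a right
rule for another connective (impossible), or a structural or left rule acting inside a context `C`.
Since filling `C ; φ` with `Γ` gives `C[Γ] ; φ`, such a rule applies just as well to the sequent
obtained from its premises by induction. -/

/-- invertibility of the (→R) rule in the cut-free calculus. -/
theorem implR_inv {Δ : Bunch} {φ ψ : Frml} :
    Proves Δ (.imp φ ψ) → Proves (.semic Δ (.frml φ)) ψ := by
  intro h
  generalize hχ : Frml.imp φ ψ = χ at h
  induction h generalizing φ ψ with
  | impR h => cases hχ; exact h
  | equiv _ hb ih => exact .equiv (ih hχ) (.ctx (.semicL .hole (.frml φ)) hb)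
  | weaken C _ ih => exact .weaken (.semicL C (.frml φ)) (ih hχ)
  | contract C _ ih => exact .contract (.semicL C (.frml φ)) (ih hχ)
  | empL C _ ih => exact .empL (.semicL C (.frml φ)) (ih hχ)
  | sepL C _ ih => exact .sepL (.semicL C (.frml φ)) (ih hχ)
  | wandL C h₁ _ _ ih => exact .wandL (.semicL C (.frml φ)) h₁ (ih hχ)
  | topL C _ ih => exact .topL (.semicL C (.frml φ)) (ih hχ)
  | andL C _ ih => exact .andL (.semicL C (.frml φ)) (ih hχ)
  | impL C h₁ _ _ ih => exact .impL (.semicL C (.frml φ)) h₁ (ih hχ)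
  | botL C => exact .botL (.semicL C (.frml φ))
  | orL C _ _ ih₁ ih₂ => exact .orL (.semicL C (.frml φ)) (ih₁ hχ) (ih₂ hχ)
  | _ => cases hχ
end

section
/- In the cut-free BI sequent calculus, the following rule is admissible: if Δ'(⟨Δ⟩) ⊢ χ is cut-free derivable, then Δ'(Δ) ⊢ χ is cut-free derivable, where ⟨Δ⟩ is the formula obtained from the bunch Δ by replacing ',' with *, ';' with ∧, ∅ₘ with emp, and ∅ₐ with ⊤. -/
deriving instance DecidableEq for Frml

def BCtx.comp : BCtx → BCtx → BCtx
  | .hole, D => D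
  | .commaL C Γ, D => .commaL (C.comp D) Γ
  | .commaR Γ C, D => .commaR Γ (C.comp D)
  | .semicL C Γ, D => .semicL (C.comp D) Γ
  | .semicR Γ C, D => .semicR Γ (C.comp D)

@[simp]
theorem BCtx.fill_comp (C D : BCtx) (Θ : Bunch) : (C.comp D).fill Θ = C.fill (D.fill Θ) := by
  induction C <;> simp [BCtx.comp, BCtx.fill, *]

def RuleAdmissible (χ : Frml) (Γ Γ' : Bunch) : Prop :=
  ∀ D : BCtx, Proves (D.fill Γ) χ → Proves (D.fill Γ') χ

namespace RuleAdmissible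

variable {χ : Frml} {Γ Γ' Γ'' Γ₁ Γ₂ Γ₁' Γ₂' : Bunch}

theorem refl (χ : Frml) (Γ : Bunch) : RuleAdmissible χ Γ Γ := fun _ => id

theorem trans (h : RuleAdmissible χ Γ Γ') (h' : RuleAdmissible χ Γ' Γ'') :
    RuleAdmissible χ Γ Γ'' :=
  fun D hD => h' D (h D hD)

theorem fill (E : BCtx) (h : RuleAdmissible χ Γ Γ') :
    RuleAdmissible χ (E.fill Γ) (E.fill Γ') := by
  intro D hD
  rw [← BCtx.fill_comp] at hD ⊢
  exact h _ hD

theorem comma (h₁ : RuleAdmissible χ Γ₁ Γ₁') (h₂ : RuleAdmissible χ Γ₂ Γ₂') :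
    RuleAdmissible χ (.comma Γ₁ Γ₂) (.comma Γ₁' Γ₂') :=
  (h₁.fill (.commaL .hole Γ₂)).trans (h₂.fill (.commaR Γ₁' .hole))

theorem semic (h₁ : RuleAdmissible χ Γ₁ Γ₁') (h₂ : RuleAdmissible χ Γ₂ Γ₂') :
    RuleAdmissible χ (.semic Γ₁ Γ₂) (.semic Γ₁' Γ₂') :=
  (h₁.fill (.semicL .hole Γ₂)).trans (h₂.fill (.semicR Γ₁' .hole))

end RuleAdmissible

/-- The invertible left rules `C(Δ) ⊢ χ / C(φ) ⊢ χ`. -/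
inductive Unfolding : Frml → Bunch → Prop
  | emp : Unfolding .emp .mempty
  | top : Unfolding .top .aempty
  | sep (φ ψ : Frml) : Unfolding (.sep φ ψ) (.comma (.frml φ) (.frml ψ))
  | and (φ ψ : Frml) : Unfolding (.and φ ψ) (.semic (.frml φ) (.frml ψ))

namespace Unfolding

variable {φ : Frml} {Δ Δ' : Bunch}

theorem collapse (g : Unfolding φ Δ) : Δ.collapse = φ := by
  cases g <;> rfl

theorem unique (g : Unfolding φ Δ) (g' : Unfolding φ Δ') : Δ = Δ' := by
  cases g <;> cases g' <;> rfl

theorem fold (g : Unfolding φ Δ) (χ : Frml) : RuleAdmissible χ Δ (.frml φ) := by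
  cases g
  exacts [fun D => .empL D, fun D => .topL D, fun D => .sepL D, fun D => .andL D]

end Unfolding

theorem RuleAdmissible.collapse (χ : Frml) : ∀ Δ : Bunch, RuleAdmissible χ Δ (.frml Δ.collapse)
  | .frml _ => refl _ _
  | .mempty => Unfolding.emp.fold χ
  | .aempty => Unfolding.top.fold χ
  | .comma Δ₁ Δ₂ => ((collapse χ Δ₁).comma (collapse χ Δ₂)).trans ((Unfolding.sep _ _).fold χ)
  | .semic Δ₁ Δ₂ => ((collapse χ Δ₁).semic (collapse χ Δ₂)).trans ((Unfolding.and _ _).fold χ)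

def Bunch.subst : Bunch → Frml → Bunch → Bunch
  | .frml ψ, φ₀, Δ₀ => if ψ = φ₀ then Δ₀ else .frml ψ
  | .mempty, _, _ => .mempty
  | .aempty, _, _ => .aempty
  | .comma Γ₁ Γ₂, φ₀, Δ₀ => .comma (Γ₁.subst φ₀ Δ₀) (Γ₂.subst φ₀ Δ₀)
  | .semic Γ₁ Γ₂, φ₀, Δ₀ => .semic (Γ₁.subst φ₀ Δ₀) (Γ₂.subst φ₀ Δ₀)

def BCtx.subst : BCtx → Frml → Bunch → BCtx
  | .hole, _, _ => .hole
  | .commaL C Γ, φ₀, Δ₀ => .commaL (C.subst φ₀ Δ₀) (Γ.subst φ₀ Δ₀)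
  | .commaR Γ C, φ₀, Δ₀ => .commaR (Γ.subst φ₀ Δ₀) (C.subst φ₀ Δ₀)
  | .semicL C Γ, φ₀, Δ₀ => .semicL (C.subst φ₀ Δ₀) (Γ.subst φ₀ Δ₀)
  | .semicR Γ C, φ₀, Δ₀ => .semicR (Γ.subst φ₀ Δ₀) (C.subst φ₀ Δ₀)

section Subst

variable {φ₀ : Frml} {Δ₀ : Bunch}

@[simp]
theorem Bunch.subst_frml_self : (Bunch.frml φ₀).subst φ₀ Δ₀ = Δ₀ := if_pos rfl

theorem Bunch.subst_frml_of_ne {ψ : Frml} (h : ψ ≠ φ₀) : (Bunch.frml ψ).subst φ₀ Δ₀ = .frml ψ :=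
  if_neg h

theorem BCtx.subst_fill (C : BCtx) (Θ : Bunch) :
    (C.fill Θ).subst φ₀ Δ₀ = (C.subst φ₀ Δ₀).fill (Θ.subst φ₀ Δ₀) := by
  induction C <;> simp [BCtx.subst, Bunch.subst, BCtx.fill, *]

theorem BEquiv.subst {Δ Δ' : Bunch} (h : BEquiv Δ Δ') :
    BEquiv (Δ.subst φ₀ Δ₀) (Δ'.subst φ₀ Δ₀) := by
  induction h with
  | refl => exact .refl _
  | symm _ ih => exact ih.symm
  | trans _ _ ih₁ ih₂ => exact ih₁.trans ih₂
  | commaComm => exact .commaComm _ _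
  | semicComm => exact .semicComm _ _
  | commaAssoc => exact .commaAssoc _ _ _
  | semicAssoc => exact .semicAssoc _ _ _
  | commaUnit => exact .commaUnit _
  | semicUnit => exact .semicUnit _
  | ctx C _ ih => rw [BCtx.subst_fill, BCtx.subst_fill]; exact .ctx _ ih

theorem RuleAdmissible.of_subst (h : Δ₀.collapse = φ₀) (χ : Frml) :
    ∀ Γ : Bunch, RuleAdmissible χ (Γ.subst φ₀ Δ₀) Γ
  | .frml ψ => by
    by_cases hψ : ψ = φ₀
    · subst hψ
      rw [Bunch.subst_frml_self, ← h]
      exact collapse χ Δ₀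
    · rw [Bunch.subst_frml_of_ne hψ]
      exact refl _ _
  | .mempty => refl _ _
  | .aempty => refl _ _
  | .comma Γ₁ Γ₂ => (of_subst h χ Γ₁).comma (of_subst h χ Γ₂)
  | .semic Γ₁ Γ₂ => (of_subst h χ Γ₁).semic (of_subst h χ Γ₂)

theorem RuleAdmissible.of_subst_ctx (h : Δ₀.collapse = φ₀) (χ : Frml) (Θ : Bunch) :
    ∀ C : BCtx, RuleAdmissible χ ((C.subst φ₀ Δ₀).fill Θ) (C.fill Θ)
  | .hole => refl _ _
  | .commaL C Γ => (of_subst_ctx h χ Θ C).comma (of_subst h χ Γ)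
  | .commaR Γ C => (of_subst h χ Γ).comma (of_subst_ctx h χ Θ C)
  | .semicL C Γ => (of_subst_ctx h χ Θ C).semic (of_subst h χ Γ)
  | .semicR Γ C => (of_subst h χ Γ).semic (of_subst_ctx h χ Θ C)

theorem Proves.subst_of_unfolding (g : Unfolding φ₀ Δ₀) {C : BCtx} {ψ χ : Frml} {Θ : Bunch}
    (g' : Unfolding ψ Θ) (ih : Proves ((C.fill Θ).subst φ₀ Δ₀) χ) :
    Proves ((C.fill (.frml ψ)).subst φ₀ Δ₀) χ := by
  rw [BCtx.subst_fill] at ih ⊢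
  have hΘ := RuleAdmissible.of_subst g.collapse χ Θ _ ih
  by_cases hψ : ψ = φ₀
  · subst hψ
    obtain rfl := g'.unique g
    rwa [Bunch.subst_frml_self]
  · rw [Bunch.subst_frml_of_ne hψ]
    exact g'.fold χ _ hΘ

theorem Proves.subst (g : Unfolding φ₀ Δ₀) {Γ : Bunch} {χ : Frml}
    (h : Proves Γ χ) : Proves (Γ.subst φ₀ Δ₀) χ := by
  have unsubst := RuleAdmissible.of_subst g.collapse
  induction h with
  | ax a => rw [Bunch.subst_frml_of_ne (by rintro rfl; cases g)]; exact .ax a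
  | equiv _ e ih => exact .equiv ih e.subst
  | weaken _ _ ih => rw [BCtx.subst_fill] at ih ⊢; exact .weaken _ ih
  | contract _ _ ih => rw [BCtx.subst_fill] at ih ⊢; exact .contract _ ih
  | empR => exact .empR
  | empL _ _ ih => exact subst_of_unfolding g .emp ih
  | sepR _ _ ih₁ ih₂ => exact .sepR ih₁ ih₂
  | sepL _ _ ih => exact subst_of_unfolding g (.sep _ _) ih
  | wandR _ ih => exact .wandR (unsubst _ _ (.commaR _ .hole) ih)
  | wandL _ _ _ ih₁ ih₂ =>
    rw [BCtx.subst_fill] at ih₂ ⊢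
    have ih₂' := ((unsubst _ _).fill (.commaR _ .hole)) _ ih₂
    rw [Bunch.subst, Bunch.subst_frml_of_ne (by rintro rfl; cases g)]
    exact .wandL _ ih₁ ih₂'
  | topR => exact .topR
  | topL _ _ ih => exact subst_of_unfolding g .top ih
  | andR _ _ ih₁ ih₂ => exact .andR ih₁ ih₂
  | andL _ _ ih => exact subst_of_unfolding g (.and _ _) ih
  | impR _ ih => exact .impR (unsubst _ _ (.semicR _ .hole) ih)
  | impL _ _ _ ih₁ ih₂ =>
    rw [BCtx.subst_fill] at ih₂ ⊢
    have ih₂' := ((unsubst _ _).fill (.semicR _ .hole)) _ ih₂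
    rw [Bunch.subst, Bunch.subst_frml_of_ne (by rintro rfl; cases g)]
    exact .impL _ ih₁ ih₂'
  | botL _ =>
    rw [BCtx.subst_fill, Bunch.subst_frml_of_ne (by rintro rfl; cases g)]
    exact .botL _
  | orR1 _ ih => exact .orR1 ih
  | orR2 _ ih => exact .orR2 ih
  | orL _ _ _ ih₁ ih₂ =>
    rw [BCtx.subst_fill] at ih₁ ih₂ ⊢
    rw [Bunch.subst_frml_of_ne (by rintro rfl; cases g)]
    exact .orL _ (unsubst _ _ _ ih₁) (unsubst _ _ _ ih₂)

end Subst

theorem Unfolding.unfold {φ : Frml} {Δ : Bunch} (g : Unfolding φ Δ) (χ : Frml) :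
    RuleAdmissible χ (.frml φ) Δ := by
  intro C h
  have h' := h.subst g
  rw [BCtx.subst_fill, Bunch.subst_frml_self] at h'
  exact RuleAdmissible.of_subst_ctx g.collapse χ Δ C .hole h'

theorem RuleAdmissible.uncollapse (χ : Frml) : ∀ Δ : Bunch, RuleAdmissible χ (.frml Δ.collapse) Δ
  | .frml _ => refl _ _
  | .mempty => Unfolding.emp.unfold χ
  | .aempty => Unfolding.top.unfold χ
  | .comma Δ₁ Δ₂ => ((Unfolding.sep _ _).unfold χ).trans ((uncollapse χ Δ₁).comma (uncollapse χ Δ₂))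
  | .semic Δ₁ Δ₂ => ((Unfolding.and _ _).unfold χ).trans ((uncollapse χ Δ₁).semic (uncollapse χ Δ₂))

/-- the collapse rule is admissible: from `Δ'(⟨Δ⟩) ⊢cf χ`
we get `Δ'(Δ) ⊢cf χ`. -/
theorem collapse_l_inv (C : BCtx) (Δ : Bunch) (χ : Frml) :
    Proves (C.fill (.frml Δ.collapse)) χ → Proves (C.fill Δ) χ :=
  RuleAdmissible.uncollapse χ Δ C
end

section
/- In the Moore collection C of cut-free-closed sets of bunches, the meet of two closed sets satisfies X ∩ Y = cl({Δ ; Δ' | Δ ∈ X, Δ' ∈ Y}). -/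
/-- The principal closed set `⟦φ⟧ = {Δ | Δ ⊢cf φ}`. -/
def pr (φ : Frml) : Set Bunch := {Δ | Proves Δ φ}

/-- The Moore closure generated by the principal sets:
`cl X = ⋂ {⟦φ⟧ | X ⊆ ⟦φ⟧}`. -/
def clB (X : Set Bunch) : Set Bunch := ⋂₀ {Y | ∃ φ : Frml, Y = pr φ ∧ X ⊆ Y}

/-- A set of bunches is closed if it is a fixpoint of the closure operator. -/
def ClosedB (X : Set Bunch) : Prop := clB X = X

/-!
Closed sets are intersections of sets `⟦φ⟧`, so they inherit `;`-weakening and `;`-contraction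
from the sequent calculus. By weakening, every generator `Δ ; Δ'` lies in both `X` and `Y`, hence
so does its closure. Conversely, `Δ ∈ X ∩ Y` gives the generator `Δ ; Δ`, and contraction in the
closure brings `Δ` back.
-/

theorem Proves.semic_left {Δ Δ' : Bunch} {φ : Frml} (h : Proves Δ φ) :
    Proves (.semic Δ Δ') φ :=
  .weaken .hole h

theorem Proves.semic_right {Δ Δ' : Bunch} {φ : Frml} (h : Proves Δ' φ) :
    Proves (.semic Δ Δ') φ :=
  .equiv h.semic_left (.semicComm Δ Δ')

theorem mem_clB_iff {S : Set Bunch} {Δ : Bunch} :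
    Δ ∈ clB S ↔ ∀ φ : Frml, S ⊆ pr φ → Proves Δ φ := by
  constructor
  · intro h φ hS
    exact h (pr φ) ⟨φ, rfl, hS⟩
  · rintro h _ ⟨φ, rfl, hS⟩
    exact h φ hS

theorem subset_clB (S : Set Bunch) : S ⊆ clB S :=
  fun _ hΔ => mem_clB_iff.2 fun _ hS => hS hΔ

theorem clB_mono {S T : Set Bunch} (hST : S ⊆ T) : clB S ⊆ clB T :=
  fun _ hΔ => mem_clB_iff.2 fun φ hT => mem_clB_iff.1 hΔ φ (hST.trans hT)

theorem ClosedB.clB_subset {S X : Set Bunch} (hX : ClosedB X) (hSX : S ⊆ X) : clB S ⊆ X :=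
  hX ▸ clB_mono hSX

theorem semic_mem_clB_left {S : Set Bunch} {Δ Δ' : Bunch} (h : Δ ∈ clB S) :
    Bunch.semic Δ Δ' ∈ clB S :=
  mem_clB_iff.2 fun φ hS => (mem_clB_iff.1 h φ hS).semic_left

theorem semic_mem_clB_right {S : Set Bunch} {Δ Δ' : Bunch} (h : Δ' ∈ clB S) :
    Bunch.semic Δ Δ' ∈ clB S :=
  mem_clB_iff.2 fun φ hS => (mem_clB_iff.1 h φ hS).semic_right

theorem mem_clB_of_semic_self_mem {S : Set Bunch} {Δ : Bunch} (h : Bunch.semic Δ Δ ∈ clB S) :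
    Δ ∈ clB S :=
  mem_clB_iff.2 fun φ hS => .contract .hole (mem_clB_iff.1 h φ hS)

theorem ClosedB.semic_mem_left {X : Set Bunch} {Δ Δ' : Bunch} (hX : ClosedB X) (h : Δ ∈ X) :
    Bunch.semic Δ Δ' ∈ X := by
  rw [← hX] at h ⊢
  exact semic_mem_clB_left h

theorem ClosedB.semic_mem_right {X : Set Bunch} {Δ Δ' : Bunch} (hX : ClosedB X) (h : Δ' ∈ X) :
    Bunch.semic Δ Δ' ∈ X := by
  rw [← hX] at h ⊢
  exact semic_mem_clB_right h

/-- meets of closed sets: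
`X ∩ Y = cl {Δ ; Δ' | Δ ∈ X, Δ' ∈ Y}`. -/
theorem meet_eq_cl_semic (X Y : Set Bunch) (hX : ClosedB X) (hY : ClosedB Y) :
    X ∩ Y = clB {b | ∃ Δ ∈ X, ∃ Δ' ∈ Y, b = Bunch.semic Δ Δ'} := by
  apply Set.Subset.antisymm
  · rintro Δ ⟨hΔX, hΔY⟩
    exact mem_clB_of_semic_self_mem (subset_clB _ ⟨Δ, hΔX, Δ, hΔY, rfl⟩)
  · apply Set.subset_inter
    · refine hX.clB_subset ?_
      rintro _ ⟨Δ, hΔ, Δ', -, rfl⟩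
      exact hX.semic_mem_left hΔ
    · refine hY.clB_subset ?_
      rintro _ ⟨Δ, -, Δ', hΔ', rfl⟩
      exact hY.semic_mem_right hΔ'
end

section
/- In the Moore collection C of cut-free-closed sets of bunches, for closed X and Y the set {Δ | ∀Δ' ∈ X, (Δ ; Δ') ∈ Y} is closed and is the Heyting implication X → Y in C (i.e., for closed Z: Z ∩ X ⊆ Y iff Z ⊆ X → Y). -/
/-!
A closed set contains every bunch that proves all the formulas proved by one of its members, so
closed sets absorb weakening and contraction, which give the adjunction `Z ∩ X ⊆ Y ↔ Z ⊆ X → Y`.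
Closedness of `X → Y` reduces to closedness of `{Γ | Γ ; Δ' ∈ Y}`, which follows from
`Γ ; Δ' ⊢ φ ↔ Γ ⊢ ⟨Δ'⟩ → φ` in the cut-free calculus: from left to right by the left rules and
`→R`, from right to left by inverting `→R` and undoing the collapse `⟨Δ'⟩`. Undoing collapses is
admissible because when `Γ` is not a formula, the main connective of `⟨Γ⟩` is `emp`, `⊤`, `*` or
`∧`, and a cut-free proof can only use such a formula on the left by the left rule of that
connective, which is exactly what the un-collapsed bunch makes redundant.
-/

namespace BCtx

def comp_s15 : BCtx → BCtx → BCtx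
  | .hole, D => D
  | .commaL C Γ, D => .commaL (C.comp_s15 D) Γ
  | .commaR Γ C, D => .commaR Γ (C.comp_s15 D)
  | .semicL C Γ, D => .semicL (C.comp_s15 D) Γ
  | .semicR Γ C, D => .semicR Γ (C.comp_s15 D)

theorem fill_comp_s15 (C D : BCtx) (Δ : Bunch) : (C.comp_s15 D).fill Δ = C.fill (D.fill Δ) := by
  induction C <;> simp [comp_s15, fill, *]

end BCtx

namespace Proves

theorem fill_collapse : ∀ (C : BCtx) (Γ : Bunch) {φ : Frml},
    Proves (C.fill Γ) φ → Proves (C.fill (.frml Γ.collapse)) φ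
  | _, .frml _, _, h => h
  | C, .mempty, _, h => empL C h
  | C, .aempty, _, h => topL C h
  | C, .comma Γ₁ Γ₂, _, h => by
      have h₁ := fill_collapse (C.comp_s15 (.commaL .hole Γ₂)) Γ₁ (by rwa [BCtx.fill_comp_s15])
      rw [BCtx.fill_comp_s15] at h₁
      have h₂ := fill_collapse (C.comp_s15 (.commaR (.frml Γ₁.collapse) .hole)) Γ₂
        (by rwa [BCtx.fill_comp_s15])
      rw [BCtx.fill_comp_s15] at h₂
      exact sepL C h₂
  | C, .semic Γ₁ Γ₂, _, h => by
      have h₁ := fill_collapse (C.comp_s15 (.semicL .hole Γ₂)) Γ₁ (by rwa [BCtx.fill_comp_s15])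
      rw [BCtx.fill_comp_s15] at h₁
      have h₂ := fill_collapse (C.comp_s15 (.semicR (.frml Γ₁.collapse) .hole)) Γ₂
        (by rwa [BCtx.fill_comp_s15])
      rw [BCtx.fill_comp_s15] at h₂
      exact andL C h₂

theorem impR_inv {Δ : Bunch} {φ ψ : Frml} (h : Proves Δ (.imp φ ψ)) :
    Proves (.semic Δ (.frml φ)) ψ := by
  generalize hχ : Frml.imp φ ψ = χ at h
  induction h with
  | impR h => cases hχ; exact h
  | equiv _ e ih => exact equiv (ih hχ) (.ctx (.semicL .hole _) e)
  | weaken C _ ih => exact weaken (.semicL C _) (ih hχ)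
  | contract C _ ih => exact contract (.semicL C _) (ih hχ)
  | empL C _ ih => exact empL (.semicL C _) (ih hχ)
  | sepL C _ ih => exact sepL (.semicL C _) (ih hχ)
  | wandL C h₁ _ _ ih => exact wandL (.semicL C _) h₁ (ih hχ)
  | topL C _ ih => exact topL (.semicL C _) (ih hχ)
  | andL C _ ih => exact andL (.semicL C _) (ih hχ)
  | impL C h₁ _ _ ih => exact impL (.semicL C _) h₁ (ih hχ)
  | botL C => exact botL (.semicL C _)
  | orL C _ _ ih₁ ih₂ => exact orL (.semicL C _) (ih₁ hχ) (ih₂ hχ)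
  | _ => cases hχ

end Proves

namespace Bunch

/-- `Collapses Δ Δ'`: `Δ'` arises from `Δ` by replacing some subtrees `Γ` with `⟨Γ⟩`. -/
inductive Collapses : Bunch → Bunch → Prop
  | collapse (Δ : Bunch) : Collapses Δ (.frml Δ.collapse)
  | mempty : Collapses .mempty .mempty
  | aempty : Collapses .aempty .aempty
  | comma {Δ₁ Δ₁' Δ₂ Δ₂' : Bunch} :
      Collapses Δ₁ Δ₁' → Collapses Δ₂ Δ₂' → Collapses (.comma Δ₁ Δ₂) (.comma Δ₁' Δ₂')
  | semic {Δ₁ Δ₁' Δ₂ Δ₂' : Bunch} :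
      Collapses Δ₁ Δ₁' → Collapses Δ₂ Δ₂' → Collapses (.semic Δ₁ Δ₂) (.semic Δ₁' Δ₂')

theorem Collapses.refl : ∀ Δ : Bunch, Collapses Δ Δ
  | .frml φ => .collapse (.frml φ)
  | .mempty => .mempty
  | .aempty => .aempty
  | .comma Δ₁ Δ₂ => .comma (.refl Δ₁) (.refl Δ₂)
  | .semic Δ₁ Δ₂ => .semic (.refl Δ₁) (.refl Δ₂)

theorem collapses_frml_iff {Δ : Bunch} {φ : Frml} : Collapses Δ (.frml φ) ↔ Δ.collapse = φ :=
  ⟨fun (.collapse _) => rfl, fun h => h ▸ .collapse Δ⟩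

theorem Collapses.exists_fill {Δ Θ : Bunch} {C : BCtx} (h : Collapses Δ (C.fill Θ)) :
    ∃ (C₀ : BCtx) (Γ : Bunch), Δ = C₀.fill Γ ∧ Collapses Γ Θ ∧
      ∀ Γ' Θ', Collapses Γ' Θ' → Collapses (C₀.fill Γ') (C.fill Θ') := by
  induction C generalizing Δ with
  | hole => exact ⟨.hole, Δ, rfl, h, fun _ _ => id⟩
  | commaL C Γ ih =>
      cases h with | comma h₁ h₂ =>
      obtain ⟨C₀, Γ₀, rfl, hΓ, hfill⟩ := ih h₁
      exact ⟨.commaL C₀ _, Γ₀, rfl, hΓ, fun _ _ h' => .comma (hfill _ _ h') h₂⟩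
  | commaR Γ C ih =>
      cases h with | comma h₁ h₂ =>
      obtain ⟨C₀, Γ₀, rfl, hΓ, hfill⟩ := ih h₂
      exact ⟨.commaR _ C₀, Γ₀, rfl, hΓ, fun _ _ h' => .comma h₁ (hfill _ _ h')⟩
  | semicL C Γ ih =>
      cases h with | semic h₁ h₂ =>
      obtain ⟨C₀, Γ₀, rfl, hΓ, hfill⟩ := ih h₁
      exact ⟨.semicL C₀ _, Γ₀, rfl, hΓ, fun _ _ h' => .semic (hfill _ _ h') h₂⟩
  | semicR Γ C ih =>
      cases h with | semic h₁ h₂ =>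
      obtain ⟨C₀, Γ₀, rfl, hΓ, hfill⟩ := ih h₂
      exact ⟨.semicR _ C₀, Γ₀, rfl, hΓ, fun _ _ h' => .semic h₁ (hfill _ _ h')⟩

end Bunch

open Bunch

theorem BEquiv.lift_collapses {Δ' Δ'' : Bunch} (e : BEquiv Δ' Δ'') :
    (∀ {Δ}, Collapses Δ Δ' → ∃ Δ₀, BEquiv Δ Δ₀ ∧ Collapses Δ₀ Δ'') ∧
    (∀ {Δ}, Collapses Δ Δ'' → ∃ Δ₀, BEquiv Δ Δ₀ ∧ Collapses Δ₀ Δ') := by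
  induction e with
  | refl => exact ⟨fun h => ⟨_, .refl _, h⟩, fun h => ⟨_, .refl _, h⟩⟩
  | symm _ ih => exact ⟨ih.2, ih.1⟩
  | trans _ _ ih₁ ih₂ =>
      refine ⟨fun h => ?_, fun h => ?_⟩
      · obtain ⟨_, e₁, h₁⟩ := ih₁.1 h
        obtain ⟨_, e₂, h₂⟩ := ih₂.1 h₁
        exact ⟨_, e₁.trans e₂, h₂⟩
      · obtain ⟨_, e₂, h₂⟩ := ih₂.2 h
        obtain ⟨_, e₁, h₁⟩ := ih₁.2 h₂
        exact ⟨_, e₂.trans e₁, h₁⟩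
  | commaComm =>
      exact ⟨fun (.comma h₁ h₂) => ⟨_, .commaComm _ _, .comma h₂ h₁⟩,
        fun (.comma h₁ h₂) => ⟨_, .commaComm _ _, .comma h₂ h₁⟩⟩
  | semicComm =>
      exact ⟨fun (.semic h₁ h₂) => ⟨_, .semicComm _ _, .semic h₂ h₁⟩,
        fun (.semic h₁ h₂) => ⟨_, .semicComm _ _, .semic h₂ h₁⟩⟩
  | commaAssoc =>
      exact ⟨fun (.comma h₁ (.comma h₂ h₃)) => ⟨_, .commaAssoc _ _ _, .comma (.comma h₁ h₂) h₃⟩,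
        fun (.comma (.comma h₁ h₂) h₃) =>
          ⟨_, .symm (.commaAssoc _ _ _), .comma h₁ (.comma h₂ h₃)⟩⟩
  | semicAssoc =>
      exact ⟨fun (.semic h₁ (.semic h₂ h₃)) => ⟨_, .semicAssoc _ _ _, .semic (.semic h₁ h₂) h₃⟩,
        fun (.semic (.semic h₁ h₂) h₃) =>
          ⟨_, .symm (.semicAssoc _ _ _), .semic h₁ (.semic h₂ h₃)⟩⟩
  | commaUnit =>
      exact ⟨fun (.comma h .mempty) => ⟨_, .commaUnit _, h⟩,
        fun h => ⟨_, .symm (.commaUnit _), .comma h .mempty⟩⟩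
  | semicUnit =>
      exact ⟨fun (.semic h .aempty) => ⟨_, .semicUnit _, h⟩,
        fun h => ⟨_, .symm (.semicUnit _), .semic h .aempty⟩⟩
  | ctx C _ ih =>
      refine ⟨fun h => ?_, fun h => ?_⟩
      · obtain ⟨C₀, Γ, rfl, hΓ, hfill⟩ := h.exists_fill
        obtain ⟨Γ₀, e, hΓ₀⟩ := ih.1 hΓ
        exact ⟨_, .ctx C₀ e, hfill _ _ hΓ₀⟩
      · obtain ⟨C₀, Γ, rfl, hΓ, hfill⟩ := h.exists_fill
        obtain ⟨Γ₀, e, hΓ₀⟩ := ih.2 hΓ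
        exact ⟨_, .ctx C₀ e, hfill _ _ hΓ₀⟩

namespace Bunch

variable {Δ : Bunch} {φ ψ : Frml}

theorem eq_of_collapse_eq_atom {a : Nat} (h : Δ.collapse = .atom a) : Δ = .frml (.atom a) := by
  cases Δ <;> simp_all [collapse]

theorem eq_of_collapse_eq_bot (h : Δ.collapse = .bot) : Δ = .frml .bot := by
  cases Δ <;> simp_all [collapse]

theorem eq_of_collapse_eq_imp (h : Δ.collapse = .imp φ ψ) : Δ = .frml (.imp φ ψ) := by
  cases Δ <;> simp_all [collapse]

theorem eq_of_collapse_eq_wand (h : Δ.collapse = .wand φ ψ) : Δ = .frml (.wand φ ψ) := by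
  cases Δ <;> simp_all [collapse]

theorem eq_of_collapse_eq_or (h : Δ.collapse = .or φ ψ) : Δ = .frml (.or φ ψ) := by
  cases Δ <;> simp_all [collapse]

theorem collapse_eq_emp (h : Δ.collapse = .emp) : Δ = .frml .emp ∨ Δ = .mempty := by
  cases Δ <;> simp_all [collapse]

theorem collapse_eq_top (h : Δ.collapse = .top) : Δ = .frml .top ∨ Δ = .aempty := by
  cases Δ <;> simp_all [collapse]

theorem collapse_eq_sep (h : Δ.collapse = .sep φ ψ) :
    Δ = .frml (.sep φ ψ) ∨ ∃ Δ₁ Δ₂, Δ = .comma Δ₁ Δ₂ ∧ Δ₁.collapse = φ ∧ Δ₂.collapse = ψ := by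
  cases Δ <;> simp_all [collapse]

theorem collapse_eq_and (h : Δ.collapse = .and φ ψ) :
    Δ = .frml (.and φ ψ) ∨ ∃ Δ₁ Δ₂, Δ = .semic Δ₁ Δ₂ ∧ Δ₁.collapse = φ ∧ Δ₂.collapse = ψ := by
  cases Δ <;> simp_all [collapse]

end Bunch

theorem Proves.of_collapses {Δ Δ' : Bunch} {φ : Frml} (h : Proves Δ' φ) (hc : Collapses Δ Δ') :
    Proves Δ φ := by
  induction h generalizing Δ with
  | ax a => rw [eq_of_collapse_eq_atom (collapses_frml_iff.mp hc)]; exact ax a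
  | equiv _ e ih =>
      obtain ⟨_, e₀, hc₀⟩ := (e.lift_collapses).1 hc
      exact equiv (ih hc₀) e₀
  | weaken C _ ih =>
      obtain ⟨C₀, _, rfl, hΓ, hfill⟩ := hc.exists_fill
      cases hΓ with | semic hΓ _ =>
      exact weaken C₀ (ih (hfill _ _ hΓ))
  | contract C _ ih =>
      obtain ⟨C₀, _, rfl, hΓ, hfill⟩ := hc.exists_fill
      exact contract C₀ (ih (hfill _ _ (.semic hΓ hΓ)))
  | empR => cases hc; exact empR
  | empL C _ ih =>
      obtain ⟨C₀, _, rfl, hΓ, hfill⟩ := hc.exists_fill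
      rcases collapse_eq_emp (collapses_frml_iff.mp hΓ) with rfl | rfl
      · exact empL C₀ (ih (hfill _ _ .mempty))
      · exact ih (hfill _ _ .mempty)
  | sepR _ _ ih₁ ih₂ =>
      cases hc with | comma hc₁ hc₂ =>
      exact sepR (ih₁ hc₁) (ih₂ hc₂)
  | sepL C _ ih =>
      obtain ⟨C₀, _, rfl, hΓ, hfill⟩ := hc.exists_fill
      rcases collapse_eq_sep (collapses_frml_iff.mp hΓ) with rfl | ⟨_, _, rfl, rfl, rfl⟩
      · exact sepL C₀ (ih (hfill _ _ (.refl _)))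
      · exact ih (hfill _ _ (.comma (.collapse _) (.collapse _)))
  | wandR _ ih => exact wandR (ih (.comma hc (.refl _)))
  | wandL C _ _ ih₁ ih₂ =>
      obtain ⟨C₀, _, rfl, hΓ, hfill⟩ := hc.exists_fill
      cases hΓ with | comma hΓ hw =>
      cases hΓ with | comma hc₁ hc₂ =>
      rw [eq_of_collapse_eq_wand (collapses_frml_iff.mp hw)]
      exact wandL C₀ (ih₁ hc₁) (ih₂ (hfill _ _ (.comma hc₂ (.refl _))))
  | topR => cases hc; exact topR
  | topL C _ ih =>
      obtain ⟨C₀, _, rfl, hΓ, hfill⟩ := hc.exists_fill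
      rcases collapse_eq_top (collapses_frml_iff.mp hΓ) with rfl | rfl
      · exact topL C₀ (ih (hfill _ _ .aempty))
      · exact ih (hfill _ _ .aempty)
  | andR _ _ ih₁ ih₂ =>
      cases hc with | semic hc₁ hc₂ =>
      exact andR (ih₁ hc₁) (ih₂ hc₂)
  | andL C _ ih =>
      obtain ⟨C₀, _, rfl, hΓ, hfill⟩ := hc.exists_fill
      rcases collapse_eq_and (collapses_frml_iff.mp hΓ) with rfl | ⟨_, _, rfl, rfl, rfl⟩
      · exact andL C₀ (ih (hfill _ _ (.refl _)))
      · exact ih (hfill _ _ (.semic (.collapse _) (.collapse _)))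
  | impR _ ih => exact impR (ih (.semic hc (.refl _)))
  | impL C _ _ ih₁ ih₂ =>
      obtain ⟨C₀, _, rfl, hΓ, hfill⟩ := hc.exists_fill
      cases hΓ with | semic hΓ hi =>
      cases hΓ with | semic hc₁ hc₂ =>
      rw [eq_of_collapse_eq_imp (collapses_frml_iff.mp hi)]
      exact impL C₀ (ih₁ hc₁) (ih₂ (hfill _ _ (.semic hc₂ (.refl _))))
  | botL C =>
      obtain ⟨C₀, _, rfl, hΓ, -⟩ := hc.exists_fill
      rw [eq_of_collapse_eq_bot (collapses_frml_iff.mp hΓ)]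
      exact botL C₀
  | orR1 _ ih => exact orR1 (ih hc)
  | orR2 _ ih => exact orR2 (ih hc)
  | orL C _ _ ih₁ ih₂ =>
      obtain ⟨C₀, _, rfl, hΓ, hfill⟩ := hc.exists_fill
      rw [eq_of_collapse_eq_or (collapses_frml_iff.mp hΓ)]
      exact orL C₀ (ih₁ (hfill _ _ (.refl _))) (ih₂ (hfill _ _ (.refl _)))

theorem Proves.semic_iff_imp_collapse {Γ Δ' : Bunch} {φ : Frml} :
    Proves (.semic Γ Δ') φ ↔ Proves Γ (.imp Δ'.collapse φ) :=
  ⟨fun h => .impR (.fill_collapse (.semicR Γ .hole) Δ' h),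
    fun h => h.impR_inv.of_collapses (.semic (.refl Γ) (.collapse Δ'))⟩

section Closure

variable {X Y Z : Set Bunch} {Δ Δ' : Bunch}

theorem mem_clB : Δ ∈ clB X ↔ ∀ φ : Frml, X ⊆ pr φ → Proves Δ φ :=
  ⟨fun h φ hX => h (pr φ) ⟨φ, rfl, hX⟩, fun h _ ⟨φ, hY, hX⟩ => hY ▸ h φ (hY ▸ hX)⟩

theorem subset_clB_s15 : X ⊆ clB X :=
  fun _ hΔ => mem_clB.mpr fun _ hX => hX hΔ

theorem ClosedB.clB_subset_s15 (hY : ClosedB Y) (h : X ⊆ Y) : clB X ⊆ Y :=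
  fun _ hΔ => hY ▸ mem_clB.mpr fun φ hY' => mem_clB.mp hΔ φ (h.trans hY')

theorem ClosedB.mem_of_proves_imp (hZ : ClosedB Z) (hΔ : Δ ∈ Z)
    (h : ∀ φ, Proves Δ φ → Proves Δ' φ) : Δ' ∈ Z :=
  hZ ▸ mem_clB.mpr fun φ hZφ => h φ (hZφ hΔ)

theorem ClosedB.semic_mem_of_left (hZ : ClosedB Z) (hΔ : Δ ∈ Z) : Bunch.semic Δ Δ' ∈ Z :=
  hZ.mem_of_proves_imp hΔ fun _ h => .weaken .hole h

theorem ClosedB.semic_mem_of_right (hZ : ClosedB Z) (hΔ' : Δ' ∈ Z) : Bunch.semic Δ Δ' ∈ Z :=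
  hZ.mem_of_proves_imp hΔ' fun _ h => .equiv (.weaken .hole h) (.semicComm Δ Δ')

theorem ClosedB.mem_of_semic_self (hZ : ClosedB Z) (h : Bunch.semic Δ Δ ∈ Z) : Δ ∈ Z :=
  hZ.mem_of_proves_imp h fun _ => .contract .hole

theorem ClosedB.setOf_semic_mem (hY : ClosedB Y) (Δ' : Bunch) :
    ClosedB {Γ | Bunch.semic Γ Δ' ∈ Y} := by
  refine (Set.Subset.antisymm (fun Γ hΓ => ?_) subset_clB_s15)
  refine hY ▸ mem_clB.mpr fun φ hYφ => Proves.semic_iff_imp_collapse.mpr ?_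
  exact mem_clB.mp hΓ _ fun Γ' hΓ' => Proves.semic_iff_imp_collapse.mp (hYφ hΓ')

end Closure

/-- for closed `X`, `Y`, the set `{Δ | ∀ Δ' ∈ X, Δ ; Δ' ∈ Y}` is
closed and is the Heyting implication `X → Y` in the algebra of closed sets. -/
theorem has_heyting_impl (X Y : Set Bunch) (hX : ClosedB X) (hY : ClosedB Y) :
    ClosedB {Δ | ∀ Δ' ∈ X, Bunch.semic Δ Δ' ∈ Y} ∧
    ∀ Z : Set Bunch, ClosedB Z →
      (Z ∩ X ⊆ Y ↔ Z ⊆ {Δ | ∀ Δ' ∈ X, Bunch.semic Δ Δ' ∈ Y}) := by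
  refine ⟨Set.Subset.antisymm (fun Δ hΔ Δ' hΔ' => ?_) subset_clB_s15, fun Z hZ => ⟨?_, ?_⟩⟩
  · exact (hY.setOf_semic_mem Δ').clB_subset_s15 (by exact fun _ hΓ => hΓ Δ' hΔ') hΔ
  · exact fun hZXY Δ hΔ Δ' hΔ' => hZXY ⟨hZ.semic_mem_of_left hΔ, hX.semic_mem_of_right hΔ'⟩
  · exact fun hZXY Δ ⟨hΔZ, hΔX⟩ => hY.mem_of_semic_self (hZXY hΔZ Δ hΔX)
end
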